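/- For every r ∈ (1, ∞] there is a constant m_{r,d} < ∞ such that for all ζ with Re ζ > 0 and all x ≠ y in ℝ^d, |∇_x (ζ-Δ)^{-1+1/(2r)}(x,y)| ≤ m_{r,d} (κ_d^{-1}·Re ζ - Δ)^{-1/2+1/(2r)}(x,y), where κ_d = d/(d-1). -/

import Mathlib

/-!
Differentiating the heat kernel in `x` brings down the factor `ρ / (2t)`, `ρ = |x - y|`. With
`ξ = ρ / (2√t)` one has `ρ / (2t) = ξ t^{-1/2}` and `e^{-ρ²/4t} = e^{-ρ²/(4κt)} e^{-ξ²(κ-1)/κ}`,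
while `ξ e^{-ξ²(κ-1)/κ} ≤ √(κ/(κ-1))`. Hence the integrand of the gradient is dominated by
`√(κ/(κ-1))` times that of the kernel with `γ` lowered by one and `ρ` replaced by `ρ/√κ`. The
substitution `t ↦ κt` identifies the latter integral, up to a power of `κ`, with the kernel at
spectral parameter `Re ζ / κ`.
-/

noncomputable section
open Real Set MeasureTheory

/-- The kernel of `(ζ-Δ)^(-γ/2)` on `ℝ^d`:
`(λ-Δ)^(-γ/2)(x,y) = (1/Γ(γ/2)) ∫₀^∞ e^(-ζ t) t^(γ/2-1) (4πt)^(-d/2) e^(-|x-y|²/(4t)) dt`. -/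
def cKer (d : ℕ) (γ : ℝ) (ζ : ℂ) (x y : EuclideanSpace ℝ (Fin d)) : ℂ :=
  (Real.Gamma (γ/2))⁻¹ •
    ∫ t in Ioi (0:ℝ), Complex.exp (-ζ * t) *
      ((t ^ (γ/2 - 1) * (4 * π * t) ^ (-(d:ℝ)/2) *
        Real.exp (-(dist x y) ^ 2 / (4 * t)) : ℝ) : ℂ)

/-- The same kernel for real `λ`, real-valued. -/
def rKer (d : ℕ) (γ : ℝ) (lam : ℝ) (x y : EuclideanSpace ℝ (Fin d)) : ℝ :=
  (Real.Gamma (γ/2))⁻¹ *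
    ∫ t in Ioi (0:ℝ), Real.exp (-lam * t) * t ^ (γ/2 - 1) * (4 * π * t) ^ (-(d:ℝ)/2) *
      Real.exp (-(dist x y) ^ 2 / (4 * t))

/-- The `i`-th component of the gradient `∇ₓ (ζ-Δ)^(-γ/2)(x,y)`, obtained by
differentiating the heat-kernel representation under the integral sign. -/
def gradKer (d : ℕ) (γ : ℝ) (ζ : ℂ) (x y : EuclideanSpace ℝ (Fin d)) (i : Fin d) : ℂ :=
  (Real.Gamma (γ/2))⁻¹ •
    ∫ t in Ioi (0:ℝ), Complex.exp (-ζ * t) *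
      ((t ^ (γ/2 - 1) * (4 * π * t) ^ (-(d:ℝ)/2) * (-(x i - y i)/(2 * t)) *
        Real.exp (-(dist x y) ^ 2 / (4 * t)) : ℝ) : ℂ)

def heatIntegrand (d : ℕ) (γ lam ρ t : ℝ) : ℝ :=
  Real.exp (-lam * t) * t ^ (γ/2 - 1) * (4 * π * t) ^ (-(d:ℝ)/2) * Real.exp (-ρ ^ 2 / (4 * t))

lemma rKer_eq_integral_heatIntegrand (d : ℕ) (γ lam : ℝ) (x y : EuclideanSpace ℝ (Fin d)) :
    rKer d γ lam x y = (Gamma (γ / 2))⁻¹ * ∫ t in Ioi 0, heatIntegrand d γ lam (dist x y) t :=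
  rfl

lemma heatIntegrand_nonneg (d : ℕ) (γ lam ρ : ℝ) {t : ℝ} (ht : 0 ≤ t) :
    0 ≤ heatIntegrand d γ lam ρ t := by
  unfold heatIntegrand; positivity

lemma mul_exp_neg_sq_div_le_sqrt {a ξ : ℝ} (ha : 0 < a) (hξ : 0 ≤ ξ) :
    ξ * exp (-ξ ^ 2 / a) ≤ √a := by
  have hs : 0 < √a := sqrt_pos.2 ha
  have key : ξ ≤ √a * exp (ξ ^ 2 / a) := calc
      ξ ≤ √a * (1 + ξ ^ 2 / a) := by
        have h : √a * (1 + ξ ^ 2 / a) = √a + ξ ^ 2 / √a := by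
          field_simp; rw [sq_sqrt ha.le]
        have h2 : 2 * ξ - √a ≤ ξ ^ 2 / √a := by
          rw [le_div_iff₀ hs]; nlinarith [sq_nonneg (ξ - √a), sq_sqrt ha.le]
        linarith
      _ ≤ √a * exp (ξ ^ 2 / a) := by gcongr; linarith [add_one_le_exp (ξ ^ 2 / a)]
  rwa [neg_div, exp_neg, ← div_eq_mul_inv, div_le_iff₀ (exp_pos _)]

lemma div_mul_heatIntegrand_le (d : ℕ) (γ lam : ℝ) {κ ρ t : ℝ} (hκ : 1 < κ) (hρ : 0 ≤ ρ)
    (ht : 0 < t) :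
    ρ / (2 * t) * heatIntegrand d γ lam ρ t ≤
      √(κ / (κ - 1)) * heatIntegrand d (γ - 1) lam (ρ / √κ) t := by
  set ξ := ρ / (2 * √t)
  have hst : 0 < √t := sqrt_pos.2 ht
  have hpow : t ^ (γ / 2 - 1) = t ^ ((γ - 1) / 2 - 1) * √t := by
    rw [sqrt_eq_rpow, ← rpow_add ht]; ring_nf
  have hexp : exp (-ρ ^ 2 / (4 * t)) =
      exp (-(ρ / √κ) ^ 2 / (4 * t)) * exp (-ξ ^ 2 / (κ / (κ - 1))) := by
    rw [← exp_add]; congr 1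
    have : κ - 1 ≠ 0 := by linarith
    rw [div_pow, div_pow, mul_pow, sq_sqrt ht.le, sq_sqrt (by linarith)]
    field_simp; ring
  have hsplit : ρ / (2 * t) * heatIntegrand d γ lam ρ t =
      (ξ * exp (-ξ ^ 2 / (κ / (κ - 1)))) * heatIntegrand d (γ - 1) lam (ρ / √κ) t := by
    unfold heatIntegrand
    rw [hpow, hexp]
    have hξ : ρ / (2 * t) * √t = ξ := by
      rw [div_mul_eq_mul_div, div_eq_div_iff (by positivity) (by positivity)]
      linear_combination 2 * ρ * mul_self_sqrt ht.le
    rw [← hξ]; ring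
  rw [hsplit]
  gcongr
  · unfold heatIntegrand; positivity
  · exact mul_exp_neg_sq_div_le_sqrt (div_pos (by linarith) (by linarith)) (by positivity)

lemma heatIntegrand_div_mul (d : ℕ) (γ lam ρ : ℝ) {κ t : ℝ} (hκ : 0 < κ) (ht : 0 ≤ t) :
    heatIntegrand d γ (lam / κ) ρ (κ * t) =
      κ ^ ((γ - d) / 2 - 1) * heatIntegrand d γ lam (ρ / √κ) t := by
  unfold heatIntegrand
  have hexp : (γ - d) / 2 - 1 = (γ / 2 - 1) + (-(d:ℝ) / 2) := by ring
  have h4 : 4 * π * (κ * t) = κ * (4 * π * t) := by ring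
  have e1 : -(lam / κ) * (κ * t) = -lam * t := by field_simp
  have e2 : -ρ ^ 2 / (4 * (κ * t)) = -(ρ / √κ) ^ 2 / (4 * t) := by
    rw [div_pow, sq_sqrt hκ.le]; ring
  rw [hexp, rpow_add hκ, mul_rpow hκ.le ht, h4, mul_rpow hκ.le (by positivity), e1, e2]
  ring

lemma integral_heatIntegrand_div (d : ℕ) (γ lam ρ : ℝ) {κ : ℝ} (hκ : 0 < κ) :
    ∫ t in Ioi 0, heatIntegrand d γ (lam / κ) ρ t =
      κ ^ ((γ - d) / 2) * ∫ t in Ioi 0, heatIntegrand d γ lam (ρ / √κ) t := by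
  have hcomp := integral_comp_mul_left_Ioi (heatIntegrand d γ (lam / κ) ρ) 0 hκ
  rw [mul_zero, smul_eq_mul, setIntegral_congr_fun measurableSet_Ioi
    (fun t (ht : 0 < t) => heatIntegrand_div_mul d γ lam ρ hκ ht.le), integral_const_mul,
    eq_inv_mul_iff_mul_eq₀ hκ.ne'] at hcomp
  rw [← hcomp, rpow_sub_one hκ.ne']
  field_simp

lemma exp_neg_div_le {b t : ℝ} (hb : 0 < b) (ht : 0 < t) (n : ℕ) :
    exp (-b / t) ≤ n.factorial / b ^ n * t ^ n := by
  have h := pow_div_factorial_le_exp _ (div_pos hb ht).le n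
  rw [div_pow, div_div, div_le_iff₀ (by positivity)] at h
  rw [neg_div, exp_neg, inv_eq_one_div, div_le_iff₀ (exp_pos _), div_mul_eq_mul_div,
    div_mul_eq_mul_div, le_div_iff₀ (by positivity)]
  linarith

lemma integrableOn_exp_mul_rpow_mul_exp_neg_div {lam b : ℝ} (hlam : 0 < lam) (hb : 0 < b)
    (q : ℝ) : IntegrableOn (fun t => exp (-lam * t) * t ^ q * exp (-b / t)) (Ioi 0) := by
  obtain ⟨n, hn⟩ : ∃ n : ℕ, -q ≤ n := exists_nat_ge (-q)
  have hdom : IntegrableOn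
      (fun t : ℝ => n.factorial / b ^ n * (t ^ (q + n) * exp (-lam * t ^ (1:ℝ)))) (Ioi 0) :=
    (integrableOn_rpow_mul_exp_neg_mul_rpow (by linarith) one_pos hlam).const_mul _
  refine hdom.mono' (by fun_prop) ?_
  filter_upwards [ae_restrict_mem measurableSet_Ioi] with t (ht : 0 < t)
  rw [norm_of_nonneg (by positivity), rpow_one, rpow_add ht, rpow_natCast]
  calc exp (-lam * t) * t ^ q * exp (-b / t)
      ≤ exp (-lam * t) * t ^ q * (n.factorial / b ^ n * t ^ n) := by
        gcongr; exact exp_neg_div_le hb ht n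
    _ = _ := by ring

lemma integrableOn_heatIntegrand (d : ℕ) (γ : ℝ) {lam ρ : ℝ} (hlam : 0 < lam) (hρ : ρ ≠ 0) :
    IntegrableOn (heatIntegrand d γ lam ρ) (Ioi 0) := by
  refine IntegrableOn.congr_fun ((integrableOn_exp_mul_rpow_mul_exp_neg_div hlam
    (by positivity : 0 < ρ ^ 2 / 4) (γ / 2 - 1 + -(d:ℝ) / 2)).const_mul ((4 * π) ^ (-(d:ℝ) / 2)))
    (fun t (ht : 0 < t) => ?_) measurableSet_Ioi
  simp only [heatIntegrand]
  rw [mul_rpow (by positivity) ht.le, rpow_add ht]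
  ring_nf

lemma norm_gradKer_le {d : ℕ} (γ : ℝ) (ζ : ℂ) (x y : EuclideanSpace ℝ (Fin d)) (i : Fin d) :
    ‖gradKer d γ ζ x y i‖ ≤
      |(Gamma (γ / 2))⁻¹| * (∫ t in Ioi 0, heatIntegrand d γ ζ.re (dist x y) t / (2 * t)) *
        |x i - y i| := by
  rw [gradKer, norm_smul, norm_eq_abs, mul_assoc, ← integral_mul_const]
  gcongr
  refine (norm_integral_le_integral_norm _).trans_eq (setIntegral_congr_fun measurableSet_Ioi
    fun t (ht : 0 < t) => ?_)
  rw [norm_mul, Complex.norm_exp, Complex.norm_real, norm_eq_abs]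
  simp only [heatIntegrand, Complex.neg_re, Complex.mul_re, Complex.ofReal_re, Complex.ofReal_im,
    mul_zero, sub_zero]
  rw [abs_mul, abs_mul, abs_mul, abs_div, abs_neg, abs_of_pos (by positivity : (0:ℝ) < 2 * t),
    abs_of_nonneg (rpow_nonneg ht.le _), abs_of_nonneg (rpow_nonneg (by positivity) _),
    abs_of_pos (exp_pos _)]
  ring

lemma sqrt_sum_norm_sq_le_mul_dist {ι E : Type*} [Fintype ι] [SeminormedAddGroup E] (g : ι → E)
    (x y : EuclideanSpace ℝ ι) {C : ℝ} (hC : 0 ≤ C) (hg : ∀ i, ‖g i‖ ≤ C * |x i - y i|) :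
    √(∑ i, ‖g i‖ ^ 2) ≤ C * dist x y := by
  rw [EuclideanSpace.dist_eq, ← sqrt_sq hC, ← sqrt_mul (sq_nonneg C), Finset.mul_sum]
  gcongr with i
  rw [← mul_pow, Real.dist_eq]
  exact pow_le_pow_left₀ (norm_nonneg _) (hg i) 2

theorem sqrt_sum_norm_gradKer_sq_le (d : ℕ) {γ κ : ℝ} (hγ : 1 < γ) (hκ : 1 < κ) {ζ : ℂ}
    (hζ : 0 < ζ.re) {x y : EuclideanSpace ℝ (Fin d)} (hxy : x ≠ y) :
    √(∑ i, ‖gradKer d γ ζ x y i‖ ^ 2) ≤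
      √(κ / (κ - 1)) * Gamma ((γ - 1) / 2) / Gamma (γ / 2) * κ ^ ((d + 1 - γ) / 2) *
        rKer d (γ - 1) (ζ.re / κ) x y := by
  set ρ := dist x y
  have hρ : 0 < ρ := dist_pos.2 hxy
  have hκ0 : 0 < κ := by linarith
  have hΓ : 0 < Gamma (γ / 2) := Gamma_pos_of_pos (by linarith)
  have hΓ' : 0 < Gamma ((γ - 1) / 2) := Gamma_pos_of_pos (by linarith)
  have hrescale : ∫ t in Ioi 0, heatIntegrand d (γ - 1) ζ.re (ρ / √κ) t =
      Gamma ((γ - 1) / 2) * κ ^ ((d + 1 - γ) / 2) * rKer d (γ - 1) (ζ.re / κ) x y := by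
    have hexp : (d + 1 - γ) / 2 = -((γ - 1 - d) / 2) := by ring
    rw [rKer_eq_integral_heatIntegrand, integral_heatIntegrand_div d _ _ _ hκ0, hexp,
      rpow_neg hκ0.le]
    field_simp
    rfl
  calc √(∑ i, ‖gradKer d γ ζ x y i‖ ^ 2)
      ≤ (Gamma (γ / 2))⁻¹ * (∫ t in Ioi 0, heatIntegrand d γ ζ.re ρ t / (2 * t)) * ρ := by
        refine sqrt_sum_norm_sq_le_mul_dist _ x y ?_ fun i => ?_
        · have := setIntegral_nonneg (μ := volume) measurableSet_Ioi fun t (ht : 0 < t) =>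
            div_nonneg (heatIntegrand_nonneg d γ ζ.re ρ ht.le) (by positivity : 0 ≤ 2 * t)
          positivity
        · simpa only [abs_inv, abs_of_pos hΓ] using norm_gradKer_le γ ζ x y i
    _ = (Gamma (γ / 2))⁻¹ * ∫ t in Ioi 0, ρ / (2 * t) * heatIntegrand d γ ζ.re ρ t := by
        rw [mul_assoc, ← integral_mul_const]
        congr 2 with t
        ring
    _ ≤ (Gamma (γ / 2))⁻¹ *
          ∫ t in Ioi 0, √(κ / (κ - 1)) * heatIntegrand d (γ - 1) ζ.re (ρ / √κ) t := by
        refine mul_le_mul_of_nonneg_left (integral_mono_of_nonneg ?_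
          ((integrableOn_heatIntegrand d _ hζ (by positivity)).const_mul _) ?_) (by positivity)
        · filter_upwards [ae_restrict_mem measurableSet_Ioi] with t (ht : 0 < t)
          exact mul_nonneg (by positivity) (heatIntegrand_nonneg d γ ζ.re ρ ht.le)
        · filter_upwards [ae_restrict_mem measurableSet_Ioi] with t (ht : 0 < t)
          exact div_mul_heatIntegrand_le d γ ζ.re hκ hρ.le ht
    _ = _ := by
        rw [integral_const_mul, hrescale]
        field_simp

lemma toReal_inv_two_mul_lt_half {r : ENNReal} (hr : 1 < r) : ((2 * r)⁻¹).toReal < 1 / 2 := by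
  have h : (2 * r)⁻¹ < 2⁻¹ := by
    rw [ENNReal.inv_lt_inv]
    simpa [mul_comm] using ENNReal.mul_lt_mul_left two_ne_zero ENNReal.ofNat_ne_top hr
  have := (ENNReal.toReal_lt_toReal (ENNReal.inv_ne_top.2 (by positivity)) (by simp)).2 h
  simpa using this

/-- for every `r ∈ (1,∞]` there is `m_{r,d} < ∞` such that for all
`Re ζ > 0` and `x ≠ y`,
`|∇ₓ (ζ-Δ)^(-1+1/(2r))(x,y)| ≤ m_{r,d} (κ_d⁻¹ Re ζ - Δ)^(-1/2+1/(2r))(x,y)`,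
`κ_d = d/(d-1)`. The exponent `-1+1/(2r)` corresponds to `γ = 2 - 2s` and
`-1/2+1/(2r)` to `γ = 1 - 2s`, where `s = 1/(2r)` (with `s = 0` when `r = ∞`). -/
theorem stmt19 (d : ℕ) (hd : 2 ≤ d) (κd : ℝ) (hκd : κd = (d:ℝ)/((d:ℝ) - 1))
    (r : ENNReal) (hr : 1 < r) (s : ℝ) (hs : s = ((2 * r)⁻¹).toReal) :
    ∃ m : ℝ, ∀ ζ : ℂ, 0 < ζ.re → ∀ x y : EuclideanSpace ℝ (Fin d), x ≠ y →
      Real.sqrt (∑ i, ‖gradKer d (2 - 2*s) ζ x y i‖ ^ 2) ≤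
        m * rKer d (1 - 2*s) (ζ.re / κd) x y := by
  have hκ : 1 < κd := by
    have hd' : (2:ℝ) ≤ d := by exact_mod_cast hd
    rw [hκd, one_lt_div (by linarith)]
    linarith
  have hs2 : s < 1 / 2 := hs ▸ toReal_inv_two_mul_lt_half hr
  have hsub : 2 - 2 * s - 1 = 1 - 2 * s := by ring
  refine ⟨√(κd / (κd - 1)) * Gamma ((1 - 2 * s) / 2) / Gamma ((2 - 2 * s) / 2) *
    κd ^ ((d + 1 - (2 - 2 * s)) / 2), fun ζ hζ x y hxy => ?_⟩
  have h := sqrt_sum_norm_gradKer_sq_le d (γ := 2 - 2 * s) (by linarith) hκ hζ hxy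
  rwa [hsub] at h
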